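/- arXiv:2306.02219 — 2 statements merged into one kernel-verified Lean document; each statement's English description precedes it below -/
import Mathlib

section
/- Let n ≥ 3. Every closed walk c : I_N → C_n in the cycle graph C_n that is based at a vertex v and has fewer than n non-stationary steps (i.e., the number of indices i with c(i) ≠ c(i+1) is at most n − 1) is based A-homotopic, after padding to a common length, to the constant walk at v. -/
/-- The path graph `I_N` on vertices `{0, 1, …, N}`, with `i` adjacent to `j` iff `|i - j| = 1`. -/
def pathG (N : ℕ) : SimpleGraph (Fin (N + 1)) where
  Adj i j := (i : ℕ) + 1 = (j : ℕ) ∨ (j : ℕ) + 1 = (i : ℕ)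
  symm := ⟨fun i j h => h.symm⟩
  loopless := ⟨fun i h => by rcases h with h | h <;> omega⟩

/-- The cycle graph `C_n` on vertices `ZMod n`, with `i` adjacent to `j` iff `j = i + 1` or
`j = i - 1` (for `n ≥ 3`). -/
def cycleG (n : ℕ) : SimpleGraph (ZMod n) :=
  SimpleGraph.fromRel (fun i j => j = i + 1)

/-- A graph map `f : G → H`: for adjacent `u v` in `G`, either `f u = f v` or
`f u, f v` are adjacent in `H`. -/
def IsGraphMap {V W : Type*} (G : SimpleGraph V) (H : SimpleGraph W) (f : V → W) : Prop :=
  ∀ ⦃u v⦄, G.Adj u v → f u = f v ∨ H.Adj (f u) (f v)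

/-- Walks `c, c' : I_N → G` (with matching endpoints) are based A-homotopic if there are `k` and a
graph map `α : I_N □ I_k → G` with `α (i, 0) = c i`, `α (i, k) = c' i`, `α (0, j) = c 0` and
`α (N, j) = c N`. -/
def BasedAHomotopic {V : Type*} (G : SimpleGraph V) (N : ℕ) (c c' : Fin (N + 1) → V) : Prop :=
  ∃ (k : ℕ) (α : Fin (N + 1) × Fin (k + 1) → V),
    IsGraphMap ((pathG N).boxProd (pathG k)) G α ∧
    (∀ i, α (i, 0) = c i) ∧ (∀ i, α (i, Fin.last k) = c' i) ∧
    (∀ j, α (0, j) = c 0) ∧ (∀ j, α (Fin.last N, j) = c (Fin.last N))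

/-- Padding a walk `c : I_N → G` to length `N' ≥ N`: the walk `i ↦ c (min i N)`. -/
def padWalk {V : Type*} {N : ℕ} (N' : ℕ) (c : Fin (N + 1) → V) : Fin (N' + 1) → V :=
  fun i => c ⟨min (i : ℕ) N, by omega⟩

/-!
A walk in `C_n` lifts along `ℤ → ZMod n` to a walk in the integer line whose steps are `0` or `±1`,
nonzero only where the original walk moves. The endpoint of the lift is a multiple of `n` of
absolute value at most the number of moves, which is less than `n`, so the lift is closed at `0`.
A closed walk in the integer line contracts by moving every point one step towards `0` per unit of
time, and projecting this homotopy back to `C_n` contracts the original walk without padding.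
-/

open SimpleGraph Finset

theorem IsGraphMap.comp {U V W : Type*} {G : SimpleGraph U} {H : SimpleGraph V}
    {K : SimpleGraph W} {f : U → V} {g : V → W} (hg : IsGraphMap H K g) (hf : IsGraphMap G H f) :
    IsGraphMap G K (g ∘ f) := by
  intro u v huv
  rcases hf huv with h | h
  · exact Or.inl (congrArg g h)
  · exact hg h

theorem BasedAHomotopic.map {V W : Type*} {G : SimpleGraph V} {H : SimpleGraph W} {f : V → W}
    (hf : IsGraphMap G H f) {N : ℕ} {c c' : Fin (N + 1) → V} (h : BasedAHomotopic G N c c') :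
    BasedAHomotopic H N (f ∘ c) (f ∘ c') := by
  obtain ⟨k, α, hα, h0, hk, hleft, hright⟩ := h
  exact ⟨k, f ∘ α, hf.comp hα, by simp [h0], by simp [hk], by simp [hleft], by simp [hright]⟩

theorem padWalk_self {V : Type*} {N : ℕ} (c : Fin (N + 1) → V) : padWalk N c = c := by
  funext i
  exact congrArg c (Fin.ext (Nat.min_eq_left i.is_le))

theorem Fin.partialSum_last {M : Type*} [AddCommMonoid M] {n : ℕ} (f : Fin n → M) :
    Fin.partialSum f (Fin.last n) = ∑ i, f i := by
  rw [Fin.partialSum, Fin.val_last, List.take_of_length_le (by simp), List.sum_ofFn]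

theorem abs_sum_le_card_ne_zero {ι : Type*} [Fintype ι] {s : ι → ℤ} (hs : ∀ i, |s i| ≤ 1) :
    |∑ i, s i| ≤ #{i | s i ≠ 0} := by
  rw [← sum_filter_ne_zero]
  calc |∑ i ∈ univ with s i ≠ 0, s i| ≤ ∑ i ∈ univ with s i ≠ 0, |s i| := abs_sum_le_sum_abs _ _
    _ ≤ #{i | s i ≠ 0} • 1 := sum_le_card_nsmul _ _ _ fun i _ => hs i
    _ = #{i | s i ≠ 0} := by simp

theorem isGraphMap_pathG_iff {V : Type*} {G : SimpleGraph V} {N : ℕ} {c : Fin (N + 1) → V} :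
    IsGraphMap (pathG N) G c ↔
      ∀ j : Fin N, c j.castSucc = c j.succ ∨ G.Adj (c j.castSucc) (c j.succ) := by
  refine ⟨fun hc j => hc (Or.inl rfl), fun hc u v huv => ?_⟩
  rcases huv with h | h
  · convert hc ⟨u, by omega⟩ using 3 <;> ext <;> simp [h]
  · convert (hc ⟨v, by omega⟩).imp Eq.symm Adj.symm using 3 <;> ext <;> simp [h]

theorem eq_or_hasse_int_adj_iff {a b : ℤ} : a = b ∨ (hasse ℤ).Adj a b ↔ |a - b| ≤ 1 := by
  rw [hasse_adj, Order.covBy_iff_add_one_eq, Order.covBy_iff_add_one_eq, abs_le]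
  omega

theorem isGraphMap_hasse_int_iff {V : Type*} {G : SimpleGraph V} {f : V → ℤ} :
    IsGraphMap G (hasse ℤ) f ↔ ∀ ⦃u v⦄, G.Adj u v → |f u - f v| ≤ 1 := by
  simp only [IsGraphMap, eq_or_hasse_int_adj_iff]

theorem pathG_adj_iff {N : ℕ} {i j : Fin (N + 1)} : (pathG N).Adj i j ↔ |(i : ℤ) - j| = 1 := by
  rw [abs_eq zero_le_one]
  change (i : ℕ) + 1 = j ∨ (j : ℕ) + 1 = i ↔ _
  omega

theorem isGraphMap_partialSum {N : ℕ} {s : Fin N → ℤ} (hs : ∀ i, |s i| ≤ 1) :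
    IsGraphMap (pathG N) (hasse ℤ) (Fin.partialSum s) := by
  rw [isGraphMap_pathG_iff]
  intro j
  rw [eq_or_hasse_int_adj_iff, Fin.partialSum_succ]
  simpa using hs j

theorem abs_sub_apply_zero_le {N : ℕ} {ℓ : Fin (N + 1) → ℤ}
    (hℓ : IsGraphMap (pathG N) (hasse ℤ) ℓ) (i : Fin (N + 1)) : |ℓ i - ℓ 0| ≤ i := by
  induction i using Fin.induction with
  | zero => simp
  | succ j ih =>
    have hstep := isGraphMap_hasse_int_iff.mp hℓ (u := j.succ) (v := j.castSucc) (Or.inr rfl)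
    have := abs_sub_le (ℓ j.succ) (ℓ j.castSucc) (ℓ 0)
    simp only [Fin.val_succ, Fin.val_castSucc] at ih ⊢
    push_cast
    linarith

def shrinkTowardZero (j x : ℤ) : ℤ := max (x - j) (min (x + j) 0)

theorem abs_shrinkTowardZero_sub_le (j j' x x' : ℤ) :
    |shrinkTowardZero j x - shrinkTowardZero j' x'| ≤ |j - j'| + |x - x'| := by
  unfold shrinkTowardZero
  rcases abs_cases (j - j') with h | h <;> rcases abs_cases (x - x') with h' | h' <;>
    rw [abs_le] <;> omega

theorem shrinkTowardZero_zero_left (x : ℤ) : shrinkTowardZero 0 x = x := by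
  unfold shrinkTowardZero; omega

theorem shrinkTowardZero_eq_zero {j x : ℤ} (h : |x| ≤ j) : shrinkTowardZero j x = 0 := by
  unfold shrinkTowardZero; rw [abs_le] at h; omega

theorem basedAHomotopic_hasse_int_const_zero {N : ℕ} {ℓ : Fin (N + 1) → ℤ}
    (hℓ : IsGraphMap (pathG N) (hasse ℤ) ℓ) (h0 : ℓ 0 = 0) (hlast : ℓ (Fin.last N) = 0) :
    BasedAHomotopic (hasse ℤ) N ℓ fun _ => 0 := by
  -- `|ℓ i| ≤ i ≤ N`, so after `N` steps every point has reached `0`.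
  refine ⟨N, fun p => shrinkTowardZero (p.2 : ℕ) (ℓ p.1), ?_, fun i => ?_, fun i => ?_,
    fun j => ?_, fun j => ?_⟩
  · rw [isGraphMap_hasse_int_iff]
    rintro ⟨i, j⟩ ⟨i', j'⟩ hadj
    refine (abs_shrinkTowardZero_sub_le _ _ _ _).trans ?_
    rw [boxProd_adj] at hadj
    rcases hadj with ⟨hi, rfl⟩ | ⟨hj, rfl⟩
    · simpa using isGraphMap_hasse_int_iff.mp hℓ hi
    · simp [pathG_adj_iff.mp hj]
  · simp [shrinkTowardZero_zero_left]
  · apply shrinkTowardZero_eq_zero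
    simpa [h0] using (abs_sub_apply_zero_le hℓ i).trans (by simpa using i.is_le)
  · simp [h0, shrinkTowardZero_eq_zero]
  · simp [hlast, shrinkTowardZero_eq_zero]

section CycleWalks

variable {n : ℕ}

theorem isGraphMap_add_intCast (v : ZMod n) :
    IsGraphMap (hasse ℤ) (cycleG n) fun z : ℤ => v + z := by
  intro a b hab
  by_cases h : v + (a : ZMod n) = v + b
  · exact Or.inl h
  refine Or.inr ((fromRel_adj _ _ _).mpr ⟨h, ?_⟩)
  rw [hasse_adj, Order.covBy_iff_add_one_eq, Order.covBy_iff_add_one_eq] at hab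
  rcases hab with rfl | rfl
  · left; push_cast; ring
  · right; push_cast; ring

def liftStep (a b : ZMod n) : ℤ := if b = a then 0 else if b = a + 1 then 1 else -1

theorem liftStep_self (a : ZMod n) : liftStep a a = 0 := if_pos rfl

theorem abs_liftStep_le_one (a b : ZMod n) : |liftStep a b| ≤ 1 := by
  unfold liftStep; split_ifs <;> simp

theorem eq_add_liftStep {a b : ZMod n} (h : a = b ∨ (cycleG n).Adj a b) :
    b = a + liftStep a b := by
  unfold liftStep
  split_ifs with hba hsucc
  · simp [hba]
  · simp [hsucc]
  · rcases h with rfl | h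
    · exact absurd rfl hba
    rcases ((fromRel_adj _ _ _).mp h).2 with h' | h'
    · exact absurd h' hsucc
    · rw [h']; push_cast; ring

theorem eq_add_partialSum_liftStep {N : ℕ} {c : Fin (N + 1) → ZMod n}
    (hc : IsGraphMap (pathG N) (cycleG n) c) (i : Fin (N + 1)) :
    c i = c 0 + Fin.partialSum (fun j => liftStep (c j.castSucc) (c j.succ)) i := by
  induction i using Fin.induction with
  | zero => simp
  | succ j ih =>
    rw [Fin.partialSum_succ, Int.cast_add, ← add_assoc, ← ih]
    exact eq_add_liftStep (isGraphMap_pathG_iff.mp hc j)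

end CycleWalks

theorem short_cycle_nullhomotopic_general (n N : ℕ)
    (c : Fin (N + 1) → ZMod n) (v : ZMod n)
    (hc : IsGraphMap (pathG N) (cycleG n) c)
    (hbase : c 0 = v) (hclosed : c (Fin.last N) = v)
    (hsteps : (Finset.univ.filter fun i : Fin N => c i.castSucc ≠ c i.succ).card ≤ n - 1) :
    ∃ N', N ≤ N' ∧
      BasedAHomotopic (cycleG n) N' (padWalk N' c) (fun _ : Fin (N' + 1) => v) := by
  set s : Fin N → ℤ := fun j => liftStep (c j.castSucc) (c j.succ)
  have hs : ∀ j, |s j| ≤ 1 := fun j => abs_liftStep_le_one _ _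
  have hlift : ∀ i, c i = v + Fin.partialSum s i := hbase ▸ eq_add_partialSum_liftStep hc
  have hdvd : (n : ℤ) ∣ ∑ j, s j := by
    rw [← ZMod.intCast_zmod_eq_zero_iff_dvd, ← Fin.partialSum_last]
    simpa [hclosed] using (hlift (Fin.last N)).symm
  have hmoves : |∑ j, s j| ≤ #{j : Fin N | c j.castSucc ≠ c j.succ} :=
    (abs_sum_le_card_ne_zero hs).trans <| Nat.cast_le.mpr <| card_le_card <|
      monotone_filter_right _ fun j _ hj heq => hj (by simp [s, heq, liftStep_self])
  have hsum : ∑ j, s j = 0 := by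
    rcases Nat.eq_zero_or_pos n with rfl | hn
    · simpa using hdvd
    · exact Int.eq_zero_of_abs_lt_dvd hdvd (by omega)
  refine ⟨N, le_rfl, ?_⟩
  have := (basedAHomotopic_hasse_int_const_zero (isGraphMap_partialSum hs) (Fin.partialSum_zero s)
    (by rw [Fin.partialSum_last, hsum])).map (isGraphMap_add_intCast v)
  convert this using 1
  · exact (padWalk_self c).trans (funext hlift)
  · funext; simp

/-- For `n ≥ 3`, every closed walk `c : I_N → C_n` based at `v` with at most `n - 1`
non-stationary steps is based A-homotopic (after padding to a common length) to the constant walk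
at `v`. -/
theorem short_cycle_nullhomotopic (n N : ℕ) (hn : 3 ≤ n)
    (c : Fin (N + 1) → ZMod n) (v : ZMod n)
    (hc : IsGraphMap (pathG N) (cycleG n) c)
    (hbase : c 0 = v) (hclosed : c (Fin.last N) = v)
    (hsteps : (Finset.univ.filter fun i : Fin N => c i.castSucc ≠ c i.succ).card ≤ n - 1) :
    ∃ N', N ≤ N' ∧
      BasedAHomotopic (cycleG n) N' (padWalk N' c) (fun _ : Fin (N' + 1) => v) :=
  short_cycle_nullhomotopic_general n N c v hc hbase hclosed hsteps
end

section
/- Let n ≥ 5, let G be a simple graph, let f : G → C_n be a graph map, and let c₁ : I_N → G be a closed walk in G based at a vertex v₁ with at most n − 1 non-stationary steps. Let c₂ : I_N → C_n be (a padding to length N of) a closed walk based at 0 going once around C_n (winding number 1), and let p : I_M → C_n be any walk from f(v₁) to 0. Then there is no graph map α : I_N □ I_M → C_n whose four boundary walks are α(i, 0) = f(c₁(i)), α(i, M) = c₂(i), α(0, j) = p(j), and α(N, j) = p(j). -/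
/-- `L : {0, …, N} → ℤ` is a lift of the walk `c : I_N → C_n`: consecutive values differ by
`-1`, `0` or `1`, and `L i ≡ c i (mod n)` for all `i`. -/
def IsLift (n N : ℕ) (c : Fin (N + 1) → ZMod n) (L : Fin (N + 1) → ℤ) : Prop :=
  (∀ i : Fin N,
      L i.succ - L i.castSucc = -1 ∨ L i.succ - L i.castSucc = 0 ∨ L i.succ - L i.castSucc = 1) ∧
  ∀ i, ((L i : ZMod n)) = c i

open scoped Classical

/-!
Summing the signed steps `±1, 0` of a walk in `C_n` gives an integer winding number, which for a
closed walk is a multiple of `n`. For `n ≥ 5` the signed steps around every unit square of a graph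
map `I_N □ I_M → C_n` cancel, so along the square the winding number of a row changes only by the
signed steps of its two end rungs; these cancel as well because the left and right sides of the
square are the same walk `p`. Hence the bottom row `f ∘ c₁` and the top row `c₂` have the same
winding number. But the bottom row has at most `n - 1` non-stationary steps, so its winding number
is a multiple of `n` of absolute value less than `n`, i.e. `0`, whereas the top row winds once.
-/

open Finset

theorem Fin.sum_univ_succ_sub_castSucc {M : Type*} [AddCommGroup M] {N : ℕ}
    (g : Fin (N + 1) → M) : ∑ i : Fin N, (g i.succ - g i.castSucc) = g (Fin.last N) - g 0 := by
  induction N with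
  | zero => simp
  | succ N ih =>
    rw [Fin.sum_univ_castSucc]
    simp only [Fin.succ_castSucc]
    rw [ih (fun i => g i.castSucc), Fin.succ_last, Fin.castSucc_zero]
    abel

theorem Int.eq_of_intCast_zmod_eq {n : ℕ} {x y : ℤ} (h : (x : ZMod n) = y)
    (hxy : (x - y).natAbs < n) : x = y := by
  rw [ZMod.intCast_eq_intCast_iff_dvd_sub] at h
  have := Int.eq_zero_of_dvd_of_natAbs_lt_natAbs h (by rwa [← Int.natAbs_neg, neg_sub])
  omega

theorem pathG_adj_castSucc_succ {N : ℕ} (i : Fin N) : (pathG N).Adj i.castSucc i.succ :=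
  Or.inl rfl

section GraphMap

variable {U V W : Type*} {G : SimpleGraph U} {H : SimpleGraph V} {K : SimpleGraph W}
  {α : U × V → W}

theorem IsGraphMap.comp_boxProdLeft (hα : IsGraphMap (G □ H) K α) (v : V) :
    IsGraphMap G K (fun u => α (u, v)) :=
  fun _ _ h => hα (SimpleGraph.boxProd_adj.2 (Or.inl ⟨h, rfl⟩))

theorem IsGraphMap.comp_boxProdRight (hα : IsGraphMap (G □ H) K α) (u : U) :
    IsGraphMap H K (fun v => α (u, v)) :=
  fun _ _ h => hα (SimpleGraph.boxProd_adj.2 (Or.inr ⟨h, rfl⟩))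

end GraphMap

def cycleStep (n : ℕ) (a b : ZMod n) : ℤ :=
  if b = a + 1 then 1 else if b = a - 1 then -1 else 0

def walkWinding {n N : ℕ} (c : Fin (N + 1) → ZMod n) : ℤ :=
  ∑ i : Fin N, cycleStep n (c i.castSucc) (c i.succ)

section CycleStep

variable {n : ℕ} {a b : ZMod n}

theorem natAbs_cycleStep_le_one (a b : ZMod n) : (cycleStep n a b).natAbs ≤ 1 := by
  unfold cycleStep; split_ifs <;> simp

theorem eq_or_cycleG_adj_iff : a = b ∨ (cycleG n).Adj a b ↔ b = a ∨ b = a + 1 ∨ b = a - 1 := by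
  rw [cycleG, SimpleGraph.fromRel_adj, eq_sub_iff_add_eq]
  grind

theorem cycleStep_cast (h : a = b ∨ (cycleG n).Adj a b) : (cycleStep n a b : ZMod n) = b - a := by
  unfold cycleStep
  split_ifs with h₁ h₂
  · rw [h₁]; push_cast; ring
  · rw [h₂]; push_cast; ring
  · rcases eq_or_cycleG_adj_iff.1 h with rfl | h | h
    · simp
    · exact absurd h h₁
    · exact absurd h h₂

theorem cycleStep_eq_of_cast (hn : 3 ≤ n) (h : a = b ∨ (cycleG n).Adj a b) {d : ℤ}
    (hd : d.natAbs ≤ 1) (hcast : (d : ZMod n) = b - a) : cycleStep n a b = d := by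
  refine Int.eq_of_intCast_zmod_eq (by rw [cycleStep_cast h, hcast]) ?_
  have := natAbs_cycleStep_le_one a b
  omega

theorem cycleStep_self (hn : 3 ≤ n) (a : ZMod n) : cycleStep n a a = 0 :=
  cycleStep_eq_of_cast hn (Or.inl rfl) (by simp) (by simp)

/-- Around a unit square the signed steps sum to a multiple of `n` of absolute value at most
`4`, hence to `0` once `n ≥ 5`. -/
theorem cycleStep_add_cycleStep_comm (hn : 5 ≤ n) {c d : ZMod n}
    (hab : a = b ∨ (cycleG n).Adj a b) (hbd : b = d ∨ (cycleG n).Adj b d)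
    (hac : a = c ∨ (cycleG n).Adj a c) (hcd : c = d ∨ (cycleG n).Adj c d) :
    cycleStep n a b + cycleStep n b d = cycleStep n a c + cycleStep n c d := by
  refine Int.eq_of_intCast_zmod_eq (n := n) ?_ ?_
  · push_cast
    rw [cycleStep_cast hab, cycleStep_cast hbd, cycleStep_cast hac, cycleStep_cast hcd]
    ring
  · have := natAbs_cycleStep_le_one a b
    have := natAbs_cycleStep_le_one b d
    have := natAbs_cycleStep_le_one a c
    have := natAbs_cycleStep_le_one c d
    omega

end CycleStep

section Winding

variable {n N : ℕ}

theorem walkWinding_cast {c : Fin (N + 1) → ZMod n} (hc : IsGraphMap (pathG N) (cycleG n) c) :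
    (walkWinding c : ZMod n) = c (Fin.last N) - c 0 := by
  rw [walkWinding, Int.cast_sum, ← Fin.sum_univ_succ_sub_castSucc]
  exact sum_congr rfl fun i _ => cycleStep_cast (hc (pathG_adj_castSucc_succ i))

theorem natAbs_walkWinding_comp_le {V : Type*} (hn : 3 ≤ n) (g : V → ZMod n)
    (c : Fin (N + 1) → V) :
    (walkWinding fun i => g (c i)).natAbs ≤ #{i : Fin N | c i.castSucc ≠ c i.succ} := by
  have hsum : walkWinding (fun i => g (c i)) = ∑ i ∈ univ.filter fun i : Fin N =>
      c i.castSucc ≠ c i.succ, cycleStep n (g (c i.castSucc)) (g (c i.succ)) := by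
    refine (sum_filter_of_ne fun i _ hi => ?_).symm
    intro heq
    exact hi (by simp only [heq, cycleStep_self hn])
  rw [hsum, card_eq_sum_ones]
  exact (Int.natAbs_sum_le _ _).trans (sum_le_sum fun i _ => natAbs_cycleStep_le_one _ _)

theorem walkWinding_add_cycleStep_last (hn : 5 ≤ n) {c c' : Fin (N + 1) → ZMod n}
    (hc : IsGraphMap (pathG N) (cycleG n) c) (hc' : IsGraphMap (pathG N) (cycleG n) c')
    (hcc' : ∀ i, c i = c' i ∨ (cycleG n).Adj (c i) (c' i)) :
    walkWinding c + cycleStep n (c (Fin.last N)) (c' (Fin.last N)) =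
      cycleStep n (c 0) (c' 0) + walkWinding c' := by
  have hrungs := Fin.sum_univ_succ_sub_castSucc fun i => cycleStep n (c i) (c' i)
  have hsquares : ∀ i : Fin N,
      cycleStep n (c i.castSucc) (c i.succ) + cycleStep n (c i.succ) (c' i.succ) =
        cycleStep n (c i.castSucc) (c' i.castSucc) + cycleStep n (c' i.castSucc) (c' i.succ) :=
    fun i => cycleStep_add_cycleStep_comm hn (hc (pathG_adj_castSucc_succ i)) (hcc' _) (hcc' _)
      (hc' (pathG_adj_castSucc_succ i))
  have hlayer := sum_congr rfl fun i (_ : i ∈ univ) => hsquares i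
  rw [sum_sub_distrib] at hrungs
  simp only [sum_add_distrib] at hlayer
  unfold walkWinding
  linarith

theorem walkWinding_eq_of_isGraphMap_boxProd (hn : 5 ≤ n) {M : ℕ}
    {α : Fin (N + 1) × Fin (M + 1) → ZMod n}
    (hα : IsGraphMap ((pathG N).boxProd (pathG M)) (cycleG n) α)
    (hends : ∀ j, α (0, j) = α (Fin.last N, j)) :
    walkWinding (fun i => α (i, 0)) = walkWinding (fun i => α (i, Fin.last M)) := by
  suffices ∀ j, walkWinding (fun i => α (i, j)) = walkWinding (fun i => α (i, 0)) from
    (this _).symm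
  refine Fin.induction rfl fun j ih => ?_
  have hstep := walkWinding_add_cycleStep_last hn (hα.comp_boxProdLeft j.castSucc)
    (hα.comp_boxProdLeft j.succ) fun i => hα.comp_boxProdRight i (pathG_adj_castSucc_succ j)
  rw [← hends, ← hends] at hstep
  linarith

namespace IsLift

variable {c : Fin (N + 1) → ZMod n} {L : Fin (N + 1) → ℤ}

theorem padWalk (h : IsLift n N c L) (N' : ℕ) :
    IsLift n N' (padWalk N' c) (padWalk N' L) := by
  refine ⟨fun i => ?_, fun i => h.2 _⟩
  by_cases hi : (i : ℕ) < N
  · have h₁ : min (i : ℕ) N = i := min_eq_left hi.le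
    have h₂ : min ((i : ℕ) + 1) N = i + 1 := min_eq_left hi
    simpa only [_root_.padWalk, Fin.val_castSucc, Fin.val_succ, h₁, h₂, Fin.castSucc_mk,
      Fin.succ_mk] using h.1 ⟨i, hi⟩
  · have h₁ : min (i : ℕ) N = N := min_eq_right (not_lt.1 hi)
    have h₂ : min ((i : ℕ) + 1) N = N := min_eq_right (by omega)
    simp [_root_.padWalk, h₁, h₂]

theorem walkWinding_eq (hn : 3 ≤ n) (h : IsLift n N c L) :
    walkWinding c = L (Fin.last N) - L 0 := by
  rw [walkWinding, ← Fin.sum_univ_succ_sub_castSucc]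
  refine sum_congr rfl fun i _ => ?_
  have hcast : ((L i.succ - L i.castSucc : ℤ) : ZMod n) = c i.succ - c i.castSucc := by
    push_cast
    rw [h.2, h.2]
  have hsucc : c i.succ = c i.castSucc + ((L i.succ - L i.castSucc : ℤ) : ZMod n) := by
    rw [hcast]; ring
  have hd := h.1 i
  refine cycleStep_eq_of_cast hn (eq_or_cycleG_adj_iff.2 ?_) (by omega) hcast
  rcases hd with hd | hd | hd <;> rw [hsucc, hd] <;> simp [sub_eq_add_neg]

end IsLift

end Winding

theorem no_stable_square_general {V : Type*} (n N M : ℕ) (hn : 5 ≤ n)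
    (f : V → ZMod n)
    (c₁ : Fin (N + 1) → V)
    (hsteps : (Finset.univ.filter fun i : Fin N => c₁ i.castSucc ≠ c₁ i.succ).card ≤ n - 1)
    (c₂ : Fin (N + 1) → ZMod n)
    (N₀ : ℕ) (hN₀ : N₀ ≤ N) (c₀ : Fin (N₀ + 1) → ZMod n)
    (L₀ : Fin (N₀ + 1) → ℤ) (hL₀ : IsLift n N₀ c₀ L₀)
    (hwind : L₀ (Fin.last N₀) - L₀ 0 = n)
    (hc₂ : c₂ = padWalk N c₀)
    (p : Fin (M + 1) → ZMod n) :
    ¬ ∃ α : Fin (N + 1) × Fin (M + 1) → ZMod n,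
        IsGraphMap ((pathG N).boxProd (pathG M)) (cycleG n) α ∧
        (∀ i, α (i, 0) = f (c₁ i)) ∧ (∀ i, α (i, Fin.last M) = c₂ i) ∧
        (∀ j, α (0, j) = p j) ∧ (∀ j, α (Fin.last N, j) = p j) := by
  rintro ⟨α, hα, hbottom, htop, hleft, hright⟩
  have hends : ∀ j, α (0, j) = α (Fin.last N, j) := fun j => (hleft j).trans (hright j).symm
  have hwinding_bottom : walkWinding (fun i => α (i, 0)) = 0 := by
    refine Int.eq_zero_of_dvd_of_natAbs_lt_natAbs (d := n) ?_ ?_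
    · rw [← ZMod.intCast_zmod_eq_zero_iff_dvd, walkWinding_cast (hα.comp_boxProdLeft 0), hends,
        sub_self]
    · have := natAbs_walkWinding_comp_le (by omega) f c₁
      simp only [hbottom]
      omega
  have hwinding_top : walkWinding (fun i => α (i, Fin.last M)) = n := by
    rw [funext htop, hc₂, (hL₀.padWalk N).walkWinding_eq (by omega)]
    simp only [padWalk, Fin.val_last, Fin.val_zero, min_eq_right hN₀, Nat.zero_min]
    exact hwind
  have := walkWinding_eq_of_isGraphMap_boxProd (by omega) hα hends
  omega

/-- Let `n ≥ 5`, let `f : G → C_n` be a graph map, and let `c₁ : I_N → G` be a closed walk based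
at `v₁` with at most `n - 1` non-stationary steps.  Let `c₂ : I_N → C_n` be a padding to length
`N` of a closed walk based at `0` with winding number `1`, and let `p : I_M → C_n` be a walk from
`f v₁` to `0`.  Then there is no graph map `α : I_N □ I_M → C_n` with boundary walks
`α (i, 0) = f (c₁ i)`, `α (i, M) = c₂ i`, `α (0, j) = p j` and `α (N, j) = p j`. -/
theorem no_stable_square {V : Type*} (n N M : ℕ) (hn : 5 ≤ n)
    (G : SimpleGraph V) (f : V → ZMod n) (hf : IsGraphMap G (cycleG n) f)
    (c₁ : Fin (N + 1) → V) (hc₁ : IsGraphMap (pathG N) G c₁)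
    (v₁ : V) (hc₁0 : c₁ 0 = v₁) (hc₁N : c₁ (Fin.last N) = v₁)
    (hsteps : (Finset.univ.filter fun i : Fin N => c₁ i.castSucc ≠ c₁ i.succ).card ≤ n - 1)
    (c₂ : Fin (N + 1) → ZMod n)
    (N₀ : ℕ) (hN₀ : N₀ ≤ N) (c₀ : Fin (N₀ + 1) → ZMod n)
    (hc₀ : IsGraphMap (pathG N₀) (cycleG n) c₀)
    (hc₀0 : c₀ 0 = 0) (hc₀N : c₀ (Fin.last N₀) = 0)
    (L₀ : Fin (N₀ + 1) → ℤ) (hL₀ : IsLift n N₀ c₀ L₀)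
    (hwind : L₀ (Fin.last N₀) - L₀ 0 = n)
    (hc₂ : c₂ = padWalk N c₀)
    (p : Fin (M + 1) → ZMod n) (hp : IsGraphMap (pathG M) (cycleG n) p)
    (hp0 : p 0 = f v₁) (hpM : p (Fin.last M) = 0) :
    ¬ ∃ α : Fin (N + 1) × Fin (M + 1) → ZMod n,
        IsGraphMap ((pathG N).boxProd (pathG M)) (cycleG n) α ∧
        (∀ i, α (i, 0) = f (c₁ i)) ∧ (∀ i, α (i, Fin.last M) = c₂ i) ∧
        (∀ j, α (0, j) = p j) ∧ (∀ j, α (Fin.last N, j) = p j) :=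
  no_stable_square_general n N M hn f c₁ hsteps c₂ N₀ hN₀ c₀ L₀ hL₀ hwind hc₂ p
end
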